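/- arXiv:1409.4523 — 3 statements merged into one kernel-verified Lean document; each statement's English description precedes it below -/
import Mathlib

section
/- Let p(t,x,y) = (2πt)^{-1/2} (exp(-(x-y)²/(2t)) - exp(-(x+y)²/(2t))) be the Dirichlet heat kernel on the half-line. Then there exists a constant C > 0 such that for all t > 0 and x, y ≥ 0, |∂p/∂x(t,x,y)| ≤ C t^{-1} exp(-(x-y)²/(4t)). -/
open MeasureTheory Real

/-- Dirichlet heat kernel of `∂/∂t - (1/2)Δ` on the half-line `D = [0,∞)`. -/
noncomputable def heatp (t x y : ℝ) : ℝ :=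
  (Real.sqrt (2 * Real.pi * t))⁻¹ *
    (Real.exp (-(x - y) ^ 2 / (2 * t)) - Real.exp (-(x + y) ^ 2 / (2 * t)))

/-!
Differentiating, `∂ₓp = (2πt)^{-1/2} t⁻¹ ((y - x) e^{-(x-y)²/2t} + (x + y) e^{-(x+y)²/2t})`.
Splitting `e^{-u²/2t} = (e^{-u²/4t})²` and using `|u| e^{-u²/4t} ≤ √t`, each term is at most
`√t e^{-(x-y)²/4t}`, because `|x - y| ≤ x + y` for `x, y ≥ 0`. Hence
`|∂ₓp| ≤ 2 (2π)^{-1/2} t⁻¹ e^{-(x-y)²/4t}`, and `2 ≤ √(2π)` gives `C = 1`.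
-/

lemma hasDerivAt_exp_neg_sq_sub_div {t : ℝ} (ht : t ≠ 0) (y x : ℝ) :
    HasDerivAt (fun x' => exp (-(x' - y) ^ 2 / (2 * t)))
      ((y - x) / t * exp (-(x - y) ^ 2 / (2 * t))) x := by
  have h : HasDerivAt (fun x' => -(x' - y) ^ 2 / (2 * t)) ((y - x) / t) x := by
    refine ((((hasDerivAt_id x).sub_const y).pow 2).neg.div_const (2 * t)).congr_deriv ?_
    field_simp
    simp only [id]
    ring
  simpa only [mul_comm] using h.exp

lemma hasDerivAt_heatp {t : ℝ} (ht : t ≠ 0) (x y : ℝ) :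
    HasDerivAt (fun x' => heatp t x' y)
      ((√(2 * π * t))⁻¹ * t⁻¹ *
        ((y - x) * exp (-(x - y) ^ 2 / (2 * t)) + (x + y) * exp (-(x + y) ^ 2 / (2 * t)))) x := by
  have h₁ := hasDerivAt_exp_neg_sq_sub_div ht y x
  have h₂ := hasDerivAt_exp_neg_sq_sub_div ht (-y) x
  simp only [sub_neg_eq_add] at h₂
  refine ((h₁.sub h₂).const_mul (√(2 * π * t))⁻¹).congr_deriv ?_
  ring

lemma abs_mul_exp_neg_sq_div_le_sqrt {t : ℝ} (ht : 0 < t) (u : ℝ) :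
    |u| * exp (-u ^ 2 / (4 * t)) ≤ √t := by
  obtain ⟨s, hs, rfl⟩ : ∃ s, 0 < s ∧ t = s ^ 2 := ⟨√t, sqrt_pos.2 ht, (sq_sqrt ht.le).symm⟩
  have hq : 0 < 1 + u ^ 2 / (4 * s ^ 2) := by positivity
  -- `exp a ≥ 1 + a` and AM-GM `|u| ≤ (4s² + u²) / (4s)`
  have hexp : exp (-u ^ 2 / (4 * s ^ 2)) ≤ (1 + u ^ 2 / (4 * s ^ 2))⁻¹ := by
    rw [neg_div, exp_neg]
    exact inv_anti₀ hq (by linarith [add_one_le_exp (u ^ 2 / (4 * s ^ 2))])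
  have hamgm : |u| ≤ s * (1 + u ^ 2 / (4 * s ^ 2)) := by
    field_simp
    nlinarith [sq_nonneg (|u| - 2 * s), sq_abs u]
  rw [sqrt_sq hs.le]
  calc |u| * exp (-u ^ 2 / (4 * s ^ 2)) ≤ |u| * (1 + u ^ 2 / (4 * s ^ 2))⁻¹ := by gcongr
    _ ≤ s := by rwa [mul_inv_le_iff₀ hq]

lemma abs_mul_exp_neg_sq_div_two_mul_le {t : ℝ} (ht : 0 < t) (u : ℝ) :
    |u * exp (-u ^ 2 / (2 * t))| ≤ √t * exp (-u ^ 2 / (4 * t)) := by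
  have hsplit : exp (-u ^ 2 / (2 * t)) = exp (-u ^ 2 / (4 * t)) * exp (-u ^ 2 / (4 * t)) := by
    rw [← exp_add]
    congr 1
    field_simp
    ring
  rw [hsplit, abs_mul, abs_mul_self, ← mul_assoc]
  gcongr
  exact abs_mul_exp_neg_sq_div_le_sqrt ht u

lemma exp_neg_sq_add_div_le {t x y : ℝ} (ht : 0 < t) (hx : 0 ≤ x) (hy : 0 ≤ y) :
    exp (-(x + y) ^ 2 / (4 * t)) ≤ exp (-(x - y) ^ 2 / (4 * t)) := by
  gcongr exp (-?_ / _)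
  nlinarith

lemma two_le_sqrt_two_mul_pi : 2 ≤ √(2 * π) := by
  rw [le_sqrt' two_pos]
  linarith [pi_gt_three]

lemma inv_sqrt_two_mul_pi_mul_mul_sqrt_le {t : ℝ} (ht : 0 < t) :
    (√(2 * π * t))⁻¹ * (2 * √t) ≤ 1 := by
  have hs : 0 < √t := sqrt_pos.2 ht
  rw [sqrt_mul (by positivity), inv_mul_le_one₀ (by positivity)]
  nlinarith [two_le_sqrt_two_mul_pi]

theorem heatp_deriv_x_bound :
    ∃ C > (0 : ℝ), ∀ t > (0 : ℝ), ∀ x y : ℝ, 0 ≤ x → 0 ≤ y →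
      |deriv (fun x' => heatp t x' y) x| ≤ C * t⁻¹ * Real.exp (-(x - y) ^ 2 / (4 * t)) := by
  refine ⟨1, one_pos, fun t ht x y hx hy => ?_⟩
  rw [(hasDerivAt_heatp ht.ne' x y).deriv]
  set F := exp (-(x - y) ^ 2 / (4 * t))
  have h₁ : |(y - x) * exp (-(x - y) ^ 2 / (2 * t))| ≤ √t * F := by
    rw [← abs_neg, ← neg_mul, neg_sub]
    exact abs_mul_exp_neg_sq_div_two_mul_le ht (x - y)
  have h₂ : |(x + y) * exp (-(x + y) ^ 2 / (2 * t))| ≤ √t * F :=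
    (abs_mul_exp_neg_sq_div_two_mul_le ht (x + y)).trans <| by
      gcongr; exact exp_neg_sq_add_div_le ht hx hy
  calc _ = (√(2 * π * t))⁻¹ * t⁻¹ * |(y - x) * exp (-(x - y) ^ 2 / (2 * t)) +
        (x + y) * exp (-(x + y) ^ 2 / (2 * t))| := by
        rw [abs_mul, abs_of_pos (by positivity)]
    _ ≤ (√(2 * π * t))⁻¹ * t⁻¹ * (√t * F + √t * F) := by
        gcongr; exact (abs_add_le _ _).trans (add_le_add h₁ h₂)
    _ = (√(2 * π * t))⁻¹ * (2 * √t) * (t⁻¹ * F) := by ring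
    _ ≤ 1 * t⁻¹ * F := by
        rw [mul_assoc 1]; gcongr; exact inv_sqrt_two_mul_pi_mul_mul_sqrt_le ht
end

section
/- Let h₂ ∈ (1/2, 1) and p be the Dirichlet heat kernel on D = [0,∞). Then there is a constant C > 0 such that for all t > 0, x ≥ 0, and θ ∈ ℝ: (∫_D |∫₀¹ ∂p/∂x(t, x + aθ, y) da|^{1/h₂} dy)^{h₂} ≤ C t^{(h₂−2)/2}. -/
open MeasureTheory Real

noncomputable def gaussBump (s m y : ℝ) : ℝ := exp (-(m - y) ^ 2 / s)

noncomputable def heatpDeriv (t x y : ℝ) : ℝ :=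
  (√(2 * π * t))⁻¹ *
    ((y - x) / t * gaussBump (2 * t) x y + (x + y) / t * gaussBump (2 * t) (-x) y)

section gaussBump

variable {s t m y : ℝ}

theorem gaussBump_pos (s m y : ℝ) : 0 < gaussBump s m y := exp_pos _

theorem gaussBump_le_one (hs : 0 ≤ s) (m y : ℝ) : gaussBump s m y ≤ 1 :=
  exp_le_one_iff.mpr (div_nonpos_of_nonpos_of_nonneg (neg_nonpos.mpr (sq_nonneg _)) hs)

theorem gaussBump_le_of_le {s' : ℝ} (hs : 0 < s) (hss' : s ≤ s') :
    gaussBump s m y ≤ gaussBump s' m y := by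
  unfold gaussBump
  rw [neg_div, neg_div, exp_le_exp, neg_le_neg_iff]
  exact div_le_div_of_nonneg_left (sq_nonneg _) hs hss'

theorem gaussBump_neg_le_gaussBump_zero {x : ℝ} (hs : 0 ≤ s) (hx : 0 ≤ x) (hy : 0 ≤ y) :
    gaussBump s (-x) y ≤ gaussBump s 0 y := by
  unfold gaussBump
  rw [neg_div, neg_div, exp_le_exp, neg_le_neg_iff]
  exact div_le_div_of_nonneg_right (by nlinarith) hs

theorem abs_sub_mul_gaussBump_le (ht : 0 < t) (m y : ℝ) :
    |m - y| * gaussBump (2 * t) m y ≤ √t * gaussBump (4 * t) m y := by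
  obtain ⟨r, hr, rfl⟩ : ∃ r, 0 < r ∧ t = r ^ 2 :=
    ⟨√t, sqrt_pos.mpr ht, (sq_sqrt ht.le).symm⟩
  rw [sqrt_sq hr.le]
  set u := |m - y|
  have hu : (m - y) ^ 2 = u ^ 2 := (sq_abs _).symm
  have hamgm : u ≤ r * exp (u ^ 2 / (4 * r ^ 2)) := by
    refine le_trans ?_ (mul_le_mul_of_nonneg_left (add_one_le_exp _) hr.le)
    rw [mul_add, mul_one, ← sub_nonneg]
    have : r * (u ^ 2 / (4 * r ^ 2)) + r - u = (u - 2 * r) ^ 2 / (4 * r) := by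
      field_simp; ring
    rw [this]; positivity
  calc u * gaussBump (2 * r ^ 2) m y
      ≤ r * exp (u ^ 2 / (4 * r ^ 2)) * gaussBump (2 * r ^ 2) m y :=
        mul_le_mul_of_nonneg_right hamgm (gaussBump_pos _ _ _).le
    _ = r * gaussBump (4 * r ^ 2) m y := by
        rw [mul_assoc, gaussBump, gaussBump, ← exp_add, hu]
        congr 2
        field_simp
        ring

theorem gaussBump_le_two_mul_gaussBump {m' : ℝ} (ht : 0 < t) (hm : (m - m') ^ 2 ≤ t) :
    gaussBump (4 * t) m y ≤ 2 * gaussBump (8 * t) m' y := by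
  have hexp : -(m - y) ^ 2 / (4 * t) ≤ 1 / 4 + -(m' - y) ^ 2 / (8 * t) := by
    rw [← sub_nonneg]
    have : 1 / 4 + -(m' - y) ^ 2 / (8 * t) - -(m - y) ^ 2 / (4 * t)
        = (2 * t + 2 * (m - y) ^ 2 - (m' - y) ^ 2) / (8 * t) := by
      field_simp; ring
    rw [this]
    exact div_nonneg (by nlinarith [sq_nonneg (m - y + (m - m'))]) (by positivity)
  calc gaussBump (4 * t) m y ≤ exp (1 / 4) * gaussBump (8 * t) m' y := by
        rw [gaussBump, gaussBump, ← exp_add]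
        exact exp_le_exp.mpr hexp
    _ ≤ 2 * gaussBump (8 * t) m' y := by
        refine mul_le_mul_of_nonneg_right ?_ (gaussBump_pos _ _ _).le
        linarith [exp_bound_div_one_sub_of_interval (x := 1 / 4) (by norm_num) (by norm_num)]

theorem integrable_gaussBump (hs : 0 < s) (m : ℝ) : Integrable (gaussBump s m) := by
  refine ((integrable_exp_neg_mul_sq (inv_pos.mpr hs)).comp_sub_left m).congr
    (Filter.Eventually.of_forall fun y => ?_)
  simp only [gaussBump]
  congr 1; ring

theorem integral_gaussBump (s m : ℝ) : ∫ y, gaussBump s m y = √(π * s) := by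
  have h := integral_sub_left_eq_self (μ := volume) (fun u : ℝ => exp (-s⁻¹ * u ^ 2)) m
  rw [integral_gaussian, div_inv_eq_mul] at h
  rw [← h]
  congr 1; ext y
  simp only [gaussBump]
  congr 1; ring

theorem setIntegral_gaussBump_le (hs : 0 < s) (m : ℝ) (S : Set ℝ) :
    ∫ y in S, gaussBump s m y ≤ √(π * s) :=
  integral_gaussBump s m ▸
    setIntegral_le_integral (integrable_gaussBump hs m)
      (Filter.Eventually.of_forall fun y => (gaussBump_pos s m y).le)

end gaussBump

section heatp

variable {t x y : ℝ}

theorem heatp_eq_gaussBump_sub (t x y : ℝ) :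
    heatp t x y = (√(2 * π * t))⁻¹ * (gaussBump (2 * t) x y - gaussBump (2 * t) (-x) y) := by
  simp only [heatp, gaussBump]
  ring_nf

theorem hasDerivAt_heatp_s12 (t x y : ℝ) :
    HasDerivAt (fun x' => heatp t x' y) (heatpDeriv t x y) x := by
  have hsub : HasDerivAt (fun x' => -(x' - y) ^ 2 / (2 * t)) (-(2 * (x - y)) / (2 * t)) x := by
    simpa using (((hasDerivAt_id x).sub_const y).pow 2).neg.div_const (2 * t)
  have hadd : HasDerivAt (fun x' => -(x' + y) ^ 2 / (2 * t)) (-(2 * (x + y)) / (2 * t)) x := by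
    simpa using (((hasDerivAt_id x).add_const y).pow 2).neg.div_const (2 * t)
  refine ((hsub.exp.sub hadd.exp).const_mul (√(2 * π * t))⁻¹).congr_deriv ?_
  simp only [heatpDeriv, gaussBump]
  ring_nf

theorem deriv_heatp (t x y : ℝ) : deriv (fun x' => heatp t x' y) x = heatpDeriv t x y :=
  (hasDerivAt_heatp_s12 t x y).deriv

theorem continuous_heatpDeriv (t y : ℝ) : Continuous fun x => heatpDeriv t x y := by
  unfold heatpDeriv gaussBump; fun_prop

theorem inv_sqrt_two_pi_mul_le (ht : 0 < t) : (√(2 * π * t))⁻¹ ≤ (√t)⁻¹ := by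
  gcongr
  nlinarith [pi_gt_three]

theorem abs_heatp_le (ht : 0 < t) (hx : 0 ≤ x) (hy : 0 ≤ y) :
    |heatp t x y| ≤ (√t)⁻¹ * (gaussBump (2 * t) x y + gaussBump (2 * t) 0 y) := by
  rw [heatp_eq_gaussBump_sub, abs_mul, abs_of_pos (by positivity)]
  gcongr ?_ * ?_
  · exact inv_sqrt_two_pi_mul_le ht
  · refine (abs_sub _ _).trans ?_
    rw [abs_of_pos (gaussBump_pos _ _ _), abs_of_pos (gaussBump_pos _ _ _)]
    gcongr
    exact gaussBump_neg_le_gaussBump_zero (by positivity) hx hy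

theorem abs_heatpDeriv_le (ht : 0 < t) (hx : 0 ≤ x) (hy : 0 ≤ y) :
    |heatpDeriv t x y| ≤ t⁻¹ * (gaussBump (4 * t) x y + gaussBump (4 * t) 0 y) := by
  have hsource : |(y - x) / t * gaussBump (2 * t) x y|
      = t⁻¹ * (|x - y| * gaussBump (2 * t) x y) := by
    rw [abs_mul, abs_div, abs_of_pos ht, abs_of_pos (gaussBump_pos _ _ _), abs_sub_comm]
    ring
  have himage : |(x + y) / t * gaussBump (2 * t) (-x) y|
      = t⁻¹ * (|-x - y| * gaussBump (2 * t) (-x) y) := by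
    rw [abs_mul, abs_div, abs_of_pos ht, abs_of_pos (gaussBump_pos _ _ _), ← abs_neg (-x - y)]
    ring_nf
  calc |heatpDeriv t x y|
      ≤ (√t)⁻¹ * (t⁻¹ * (|x - y| * gaussBump (2 * t) x y)
          + t⁻¹ * (|-x - y| * gaussBump (2 * t) (-x) y)) := by
        rw [heatpDeriv, abs_mul, abs_of_pos (by positivity), ← hsource, ← himage]
        gcongr ?_ * ?_
        · exact inv_sqrt_two_pi_mul_le ht
        · exact abs_add_le _ _
    _ ≤ (√t)⁻¹ * (t⁻¹ * (√t * gaussBump (4 * t) x y)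
          + t⁻¹ * (√t * gaussBump (4 * t) 0 y)) := by
        gcongr _ * (_ * ?_ + _ * ?_)
        · exact abs_sub_mul_gaussBump_le ht x y
        · refine (abs_sub_mul_gaussBump_le ht (-x) y).trans ?_
          gcongr
          exact gaussBump_neg_le_gaussBump_zero (by positivity) hx hy
    _ = t⁻¹ * (gaussBump (4 * t) x y + gaussBump (4 * t) 0 y) := by
        have := (sqrt_pos.mpr ht).ne'
        field_simp

end heatp

section average

variable {t x θ y : ℝ}

theorem setIntegral_Icc_heatpDeriv_eq_slope (hθ : θ ≠ 0) :
    ∫ a in Set.Icc (0 : ℝ) 1, heatpDeriv t (x + a * θ) y =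
      slope (fun x' => heatp t x' y) x (x + θ) := by
  rw [integral_Icc_eq_integral_Ioc, ← intervalIntegral.integral_of_le zero_le_one]
  simp_rw [mul_comm _ θ]
  rw [intervalIntegral.integral_comp_add_mul (fun z => heatpDeriv t z y) hθ, mul_zero, add_zero,
    mul_one, intervalIntegral.integral_eq_sub_of_hasDerivAt (fun z _ => hasDerivAt_heatp_s12 t z y)
      ((continuous_heatpDeriv t y).intervalIntegrable _ _),
    slope_def_field, add_sub_cancel_left, smul_eq_mul, div_eq_inv_mul]

theorem abs_setIntegral_heatpDeriv_le_of_sq_le (ht : 0 < t) (hx : 0 ≤ x) (hxθ : 0 ≤ x + θ)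
    (hy : 0 ≤ y) (hθ : θ ^ 2 ≤ t) :
    |∫ a in Set.Icc (0 : ℝ) 1, heatpDeriv t (x + a * θ) y| ≤
      t⁻¹ * (2 * gaussBump (8 * t) x y + gaussBump (8 * t) 0 y) := by
  have hbound : ∀ a ∈ Set.Icc (0 : ℝ) 1, ‖heatpDeriv t (x + a * θ) y‖ ≤
      t⁻¹ * (2 * gaussBump (8 * t) x y + gaussBump (8 * t) 0 y) := by
    rintro a ⟨ha₀, ha₁⟩
    have hz : 0 ≤ x + a * θ := by nlinarith
    have hshift : (x + a * θ - x) ^ 2 ≤ t := by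
      rw [add_sub_cancel_left, mul_pow]
      exact (mul_le_of_le_one_left (sq_nonneg θ) (pow_le_one₀ ha₀ ha₁)).trans hθ
    refine (abs_heatpDeriv_le ht hz hy).trans ?_
    gcongr t⁻¹ * (?_ + ?_)
    · exact gaussBump_le_two_mul_gaussBump ht hshift
    · exact gaussBump_le_of_le (by positivity) (by linarith)
  simpa [volume_real_Icc] using
    norm_setIntegral_le_of_norm_le_const (μ := volume) measure_Icc_lt_top hbound

theorem abs_slope_heatp_le (ht : 0 < t) (hx : 0 ≤ x) (hxθ : 0 ≤ x + θ) (hy : 0 ≤ y)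
    (hθ : t ≤ θ ^ 2) :
    |slope (fun x' => heatp t x' y) x (x + θ)| ≤
      t⁻¹ * (gaussBump (8 * t) x y + gaussBump (8 * t) (x + θ) y
        + 2 * gaussBump (8 * t) 0 y) := by
  have hst : 0 < √t := sqrt_pos.mpr ht
  have hθ' : √t ≤ |θ| := sqrt_sq_eq_abs θ ▸ sqrt_le_sqrt hθ
  have hwiden : ∀ m, gaussBump (2 * t) m y ≤ gaussBump (8 * t) m y :=
    fun m => gaussBump_le_of_le (by positivity) (by linarith)
  have hdiff :=
    (abs_sub _ _).trans (add_le_add (abs_heatp_le ht hxθ hy) (abs_heatp_le ht hx hy))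
  rw [slope_def_field, add_sub_cancel_left, abs_div]
  calc |heatp t (x + θ) y - heatp t x y| / |θ|
      ≤ ((√t)⁻¹ * (gaussBump (2 * t) (x + θ) y + gaussBump (2 * t) 0 y)
          + (√t)⁻¹ * (gaussBump (2 * t) x y + gaussBump (2 * t) 0 y)) / √t :=
        div_le_div₀ ((abs_nonneg _).trans hdiff) hdiff hst hθ'
    _ ≤ ((√t)⁻¹ * (gaussBump (8 * t) (x + θ) y + gaussBump (8 * t) 0 y)
          + (√t)⁻¹ * (gaussBump (8 * t) x y + gaussBump (8 * t) 0 y)) / √t := by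
        gcongr <;> exact hwiden _
    _ = _ := by
        field_simp
        rw [sq_sqrt ht.le]
        ring

theorem abs_setIntegral_heatpDeriv_le (ht : 0 < t) (hx : 0 ≤ x) (hxθ : 0 ≤ x + θ)
    (hy : 0 ≤ y) :
    |∫ a in Set.Icc (0 : ℝ) 1, heatpDeriv t (x + a * θ) y| ≤
      2 / t * (gaussBump (8 * t) x y + gaussBump (8 * t) (x + θ) y
        + gaussBump (8 * t) 0 y) := by
  have := gaussBump_pos (8 * t) x y
  have := gaussBump_pos (8 * t) (x + θ) y
  have := gaussBump_pos (8 * t) 0 y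
  rw [div_eq_mul_inv, mul_comm 2, mul_assoc]
  rcases le_total (θ ^ 2) t with hθ | hθ
  · refine (abs_setIntegral_heatpDeriv_le_of_sq_le ht hx hxθ hy hθ).trans ?_
    gcongr
    linarith
  · have hθ₀ : θ ≠ 0 := by rintro rfl; linarith
    rw [setIntegral_Icc_heatpDeriv_eq_slope hθ₀]
    refine (abs_slope_heatp_le ht hx hxθ hy hθ).trans ?_
    gcongr
    linarith

end average

theorem rpow_le_rpow_sub_one_mul {u M q : ℝ} (hu : 0 ≤ u) (huM : u ≤ M) (hq : 1 ≤ q) :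
    u ^ q ≤ M ^ (q - 1) * u := by
  rcases hu.eq_or_lt with rfl | hu
  · rw [zero_rpow (by linarith), mul_zero]
  calc u ^ q = u ^ (q - 1) * u := by rw [rpow_sub_one hu.ne', div_mul_cancel₀ _ hu.ne']
    _ ≤ M ^ (q - 1) * u := by gcongr

theorem integral_rpow_abs_setIntegral_heatpDeriv_le {t x θ q : ℝ} (ht : 0 < t) (hx : 0 ≤ x)
    (hxθ : 0 ≤ x + θ) (hq : 1 ≤ q) :
    ∫ y in Set.Ioi (0 : ℝ), |∫ a in Set.Icc (0 : ℝ) 1, heatpDeriv t (x + a * θ) y| ^ q ≤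
      (6 / t) ^ q * √(π * (8 * t)) := by
  set G : ℝ → ℝ := gaussBump (8 * t) x + gaussBump (8 * t) (x + θ) + gaussBump (8 * t) 0
    with hG
  have h8t : 0 < 8 * t := by positivity
  have hG_nonneg : ∀ y, 0 ≤ G y := fun y => by
    simp only [hG, Pi.add_apply]
    linarith [gaussBump_pos (8 * t) x y, gaussBump_pos (8 * t) (x + θ) y,
      gaussBump_pos (8 * t) 0 y]
  have hG_le : ∀ y, G y ≤ 3 := fun y => by
    simp only [hG, Pi.add_apply]
    linarith [gaussBump_le_one h8t.le x y, gaussBump_le_one h8t.le (x + θ) y,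
      gaussBump_le_one h8t.le 0 y]
  have hG_int : ∀ m, IntegrableOn (gaussBump (8 * t) m) (Set.Ioi 0) :=
    fun m => (integrable_gaussBump h8t m).integrableOn
  have hG_integral : ∫ y in Set.Ioi (0 : ℝ), G y ≤ 3 * √(π * (8 * t)) := by
    rw [hG, integral_add' ((hG_int _).add (hG_int _)) (hG_int _),
      integral_add' (hG_int _) (hG_int _)]
    linarith [setIntegral_gaussBump_le h8t x (Set.Ioi 0),
      setIntegral_gaussBump_le h8t (x + θ) (Set.Ioi 0),
      setIntegral_gaussBump_le h8t 0 (Set.Ioi 0)]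
  have hpointwise : ∀ y ∈ Set.Ioi (0 : ℝ),
      |∫ a in Set.Icc (0 : ℝ) 1, heatpDeriv t (x + a * θ) y| ^ q ≤
        (2 / t) ^ q * 3 ^ (q - 1) * G y := fun y hy => by
    calc |∫ a in Set.Icc (0 : ℝ) 1, heatpDeriv t (x + a * θ) y| ^ q
        ≤ (2 / t * G y) ^ q :=
          rpow_le_rpow (abs_nonneg _) (abs_setIntegral_heatpDeriv_le ht hx hxθ (le_of_lt hy))
            (by linarith)
      _ = (2 / t) ^ q * G y ^ q := mul_rpow (by positivity) (hG_nonneg y)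
      _ ≤ (2 / t) ^ q * (3 ^ (q - 1) * G y) := by
          gcongr
          exact rpow_le_rpow_sub_one_mul (hG_nonneg y) (hG_le y) hq
      _ = (2 / t) ^ q * 3 ^ (q - 1) * G y := by ring
  calc _ ≤ ∫ y in Set.Ioi (0 : ℝ), (2 / t) ^ q * 3 ^ (q - 1) * G y :=
        setIntegral_mono_of_nonneg (fun _ _ => by positivity) hpointwise
          ((((hG_int _).add (hG_int _)).add (hG_int _)).const_mul _)
    _ = (2 / t) ^ q * 3 ^ (q - 1) * ∫ y in Set.Ioi (0 : ℝ), G y := integral_const_mul _ _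
    _ ≤ (2 / t) ^ q * 3 ^ (q - 1) * (3 * √(π * (8 * t))) := by gcongr
    _ = (6 / t) ^ q * √(π * (8 * t)) := by
        rw [show 6 / t = 2 / t * 3 by ring, mul_rpow (by positivity) (by norm_num),
          rpow_sub_one (by norm_num)]
        field_simp

theorem heatp_deriv_averaged_Lp_bound (h₂ : ℝ) (hh₂ : h₂ ∈ Set.Ioo (1/2 : ℝ) 1) :
    ∃ C > (0 : ℝ), ∀ t > (0 : ℝ), ∀ x : ℝ, 0 ≤ x → ∀ θ : ℝ,
      (∀ a ∈ Set.Icc (0 : ℝ) 1, 0 ≤ x + a * θ) →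
      (∫ y in Set.Ioi (0 : ℝ),
          |∫ a in Set.Icc (0 : ℝ) 1, deriv (fun x' => heatp t x' y) (x + a * θ)| ^ (1 / h₂)) ^ h₂ ≤
        C * t ^ ((h₂ - 2) / 2) := by
  have hh₂_pos : 0 < h₂ := by linarith [hh₂.1]
  refine ⟨6 * (8 * π) ^ (h₂ / 2), by positivity, fun t ht x hx θ hxθ => ?_⟩
  have hxθ₁ : 0 ≤ x + θ := by simpa using hxθ 1 (by simp)
  simp only [deriv_heatp]
  calc _ ≤ ((6 / t) ^ (1 / h₂) * √(π * (8 * t))) ^ h₂ :=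
        rpow_le_rpow (setIntegral_nonneg measurableSet_Ioi fun _ _ => by positivity)
          (integral_rpow_abs_setIntegral_heatpDeriv_le ht hx hxθ₁
            (one_le_one_div hh₂_pos hh₂.2.le)) hh₂_pos.le
    _ = 6 * (8 * π) ^ (h₂ / 2) * t ^ ((h₂ - 2) / 2) := by
        rw [mul_rpow (by positivity) (by positivity), ← rpow_mul (by positivity),
          one_div_mul_cancel hh₂_pos.ne', rpow_one, sqrt_eq_rpow, ← rpow_mul (by positivity),
          show π * (8 * t) = 8 * π * t by ring, mul_rpow (by positivity) ht.le,
          show (h₂ - 2) / 2 = 1 / 2 * h₂ - 1 by ring, rpow_sub_one ht.ne', one_div_mul_eq_div]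
        ring
end

section
/- Let h ∈ (0,1) and r_h(s,t) = (1/2)(t^{2h} + s^{2h} − |t−s|^{2h}) on [0,∞)². Then r_h is a positive semidefinite kernel: for all n, points t₁,…,tₙ ≥ 0 and reals λ₁,…,λₙ, ∑ᵢ∑ⱼ λᵢλⱼ r_h(tᵢ,tⱼ) ≥ 0. -/
open Real MeasureTheory Set Finset

/-!
For `0 < p < 2` the Fourier-type formula
`|x| ^ p * ∫₀^∞ u ^ (-1 - p) * (1 - cos u) du = ∫₀^∞ u ^ (-1 - p) * (1 - cos (x u)) du`
(substitute `v = |x| u`) writes `|x| ^ p` as a positive multiple of a mixture of the functions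
`φ_u x = 1 - cos (x u)`. For each of them
`φ_u t + φ_u s - φ_u (t - s) = (1 - cos (s u)) (1 - cos (t u)) + sin (s u) sin (t u)`
is a sum of two rank-one kernels, hence positive semidefinite, and positive semidefiniteness
survives the mixture. The covariance `r_h` is half of this kernel for `p = 2h`.
-/

def IsPosSemidefKernel {X : Type*} (K : X → X → ℝ) : Prop :=
  ∀ (n : ℕ) (t : Fin n → X) (lam : Fin n → ℝ), 0 ≤ ∑ i, ∑ j, lam i * lam j * K (t i) (t j)

namespace IsPosSemidefKernel

variable {X : Type*} {K L : X → X → ℝ}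

lemma mul_self (f : X → ℝ) : IsPosSemidefKernel fun s t => f s * f t := by
  intro n t lam
  have hsq : ∑ i, ∑ j, lam i * lam j * (f (t i) * f (t j)) = (∑ i, lam i * f (t i)) ^ 2 := by
    rw [sq, sum_mul_sum]
    exact sum_congr rfl fun i _ => sum_congr rfl fun j _ => by ring
  rw [hsq]
  positivity

lemma add (hK : IsPosSemidefKernel K) (hL : IsPosSemidefKernel L) :
    IsPosSemidefKernel fun s t => K s t + L s t := by
  intro n t lam
  simp only [mul_add, sum_add_distrib]
  exact add_nonneg (hK n t lam) (hL n t lam)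

lemma const_mul (hK : IsPosSemidefKernel K) {c : ℝ} (hc : 0 ≤ c) :
    IsPosSemidefKernel fun s t => c * K s t := by
  intro n t lam
  simp only [mul_left_comm _ c, ← mul_sum]
  exact mul_nonneg hc (hK n t lam)

lemma of_const_mul {c : ℝ} (hc : 0 < c) (h : IsPosSemidefKernel fun s t => c * K s t) :
    IsPosSemidefKernel K := by
  simpa only [inv_mul_cancel_left₀ hc.ne'] using h.const_mul (inv_nonneg.2 hc.le)

lemma integral {Ω : Type*} [MeasurableSpace Ω] {μ : Measure Ω} {k : Ω → X → X → ℝ}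
    (hint : ∀ s t, Integrable (fun u => k u s t) μ) (hk : ∀ᵐ u ∂μ, IsPosSemidefKernel (k u)) :
    IsPosSemidefKernel fun s t => ∫ u, k u s t ∂μ := by
  intro n t lam
  have hswap : ∑ i, ∑ j, lam i * lam j * ∫ u, k u (t i) (t j) ∂μ
      = ∫ u, ∑ i, ∑ j, lam i * lam j * k u (t i) (t j) ∂μ := by
    rw [integral_finsetSum _ fun i _ => integrable_finsetSum _ fun j _ => (hint _ _).const_mul _]
    simp only [integral_finsetSum _ fun j _ => (hint _ _).const_mul _, integral_const_mul]
  rw [hswap]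
  exact integral_nonneg_of_ae (hk.mono fun u hu => hu n t lam)

end IsPosSemidefKernel

def incrementKernel (φ : ℝ → ℝ) (s t : ℝ) : ℝ := φ t + φ s - φ (t - s)

lemma incrementKernel_const_mul (c : ℝ) (φ : ℝ → ℝ) :
    incrementKernel (fun x => c * φ x) = fun s t => c * incrementKernel φ s t := by
  funext s t
  simp only [incrementKernel]
  ring

lemma incrementKernel_one_sub_cos_mul (u : ℝ) :
    incrementKernel (fun x => 1 - cos (x * u))
      = fun s t => (1 - cos (s * u)) * (1 - cos (t * u)) + sin (s * u) * sin (t * u) := by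
  funext s t
  simp only [incrementKernel, sub_mul, cos_sub]
  ring

lemma isPosSemidefKernel_incrementKernel_one_sub_cos_mul (u : ℝ) :
    IsPosSemidefKernel (incrementKernel fun x => 1 - cos (x * u)) := by
  rw [incrementKernel_one_sub_cos_mul]
  exact (IsPosSemidefKernel.mul_self _).add (IsPosSemidefKernel.mul_self _)

lemma isPosSemidefKernel_incrementKernel_integral {Ω : Type*} [MeasurableSpace Ω]
    {μ : Measure Ω} {g : Ω → ℝ → ℝ} (hg : ∀ x, Integrable (fun u => g u x) μ)
    (hk : ∀ᵐ u ∂μ, IsPosSemidefKernel (incrementKernel (g u))) :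
    IsPosSemidefKernel (incrementKernel fun x => ∫ u, g u x ∂μ) := by
  have hmix : (incrementKernel fun x => ∫ u, g u x ∂μ)
      = fun s t => ∫ u, incrementKernel (g u) s t ∂μ := by
    funext s t
    simp only [incrementKernel]
    rw [← integral_add (hg t) (hg s)]
    exact (integral_sub ((hg t).add (hg s)) (hg _)).symm
  rw [hmix]
  exact IsPosSemidefKernel.integral (fun s t => ((hg t).add (hg s)).sub (hg _)) hk

section FractionalPower

variable {p : ℝ}

lemma integrableOn_rpow_mul_one_sub_cos_mul (hp0 : 0 < p) (hp2 : p < 2) (x : ℝ) :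
    IntegrableOn (fun u => u ^ (-1 - p) * (1 - cos (x * u))) (Ioi 0) := by
  have hmeas : AEStronglyMeasurable (fun u : ℝ => u ^ (-1 - p) * (1 - cos (x * u))) volume := by
    fun_prop
  rw [← Ioc_union_Ioi_eq_Ioi zero_le_one]
  refine IntegrableOn.union ?_ ?_
  · have hdom : IntegrableOn (fun u : ℝ => x ^ 2 / 2 * u ^ (1 - p)) (Ioc 0 1) := by
      refine Integrable.const_mul ?_ _
      exact (intervalIntegrable_iff_integrableOn_Ioc_of_le zero_le_one).1
        (intervalIntegral.intervalIntegrable_rpow' (by linarith))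
    refine hdom.mono' hmeas.restrict ?_
    filter_upwards [ae_restrict_mem measurableSet_Ioc] with u hu
    have hu : 0 < u := hu.1
    have hcos : 0 ≤ 1 - cos (x * u) := sub_nonneg.2 (cos_le_one _)
    have hpow : u ^ 2 * u ^ (-1 - p) = u ^ (1 - p) := by
      rw [← rpow_natCast, ← rpow_add hu]
      congr 1
      push_cast
      ring
    calc ‖u ^ (-1 - p) * (1 - cos (x * u))‖ = u ^ (-1 - p) * (1 - cos (x * u)) :=
          Real.norm_of_nonneg (mul_nonneg (rpow_nonneg hu.le _) hcos)
      _ ≤ u ^ (-1 - p) * ((x * u) ^ 2 / 2) := by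
          gcongr
          linarith [one_sub_sq_div_two_le_cos (x := x * u)]
      _ = x ^ 2 / 2 * u ^ (1 - p) := by rw [← hpow]; ring
  · have hdom : IntegrableOn (fun u : ℝ => 2 * u ^ (-1 - p)) (Ioi 1) :=
      (integrableOn_Ioi_rpow_of_lt (by linarith) one_pos).const_mul 2
    refine hdom.mono' hmeas.restrict ?_
    filter_upwards [ae_restrict_mem measurableSet_Ioi] with u hu
    have hu0 : 0 < u := one_pos.trans hu
    rw [Real.norm_of_nonneg (mul_nonneg (rpow_nonneg hu0.le _) (sub_nonneg.2 (cos_le_one _))),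
      mul_comm]
    gcongr
    linarith [neg_one_le_cos (x * u)]

lemma integral_rpow_mul_one_sub_cos_mul (hp0 : 0 < p) (x : ℝ) :
    ∫ u in Ioi 0, u ^ (-1 - p) * (1 - cos (x * u))
      = |x| ^ p * ∫ u in Ioi 0, u ^ (-1 - p) * (1 - cos u) := by
  have heven : ∫ u in Ioi 0, u ^ (-1 - p) * (1 - cos (x * u))
      = ∫ u in Ioi 0, u ^ (-1 - p) * (1 - cos (|x| * u)) :=
    setIntegral_congr_fun measurableSet_Ioi fun u (hu : 0 < u) => by
      rw [← cos_abs (x * u), abs_mul, abs_of_pos hu]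
  rw [heven]
  rcases (abs_nonneg x).eq_or_lt with hx | hx
  · simp [← hx, zero_rpow hp0.ne']
  set y := |x|
  calc ∫ u in Ioi 0, u ^ (-1 - p) * (1 - cos (y * u))
      = ∫ u in Ioi 0, y ^ (1 + p) * ((y * u) ^ (-1 - p) * (1 - cos (y * u))) :=
        setIntegral_congr_fun measurableSet_Ioi fun u (hu : 0 < u) => by
          rw [mul_rpow hx.le hu.le, ← mul_assoc, ← mul_assoc, ← rpow_add hx]
          norm_num
    _ = y ^ (1 + p) * (y⁻¹ * ∫ v in Ioi 0, v ^ (-1 - p) * (1 - cos v)) := by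
        rw [integral_const_mul, integral_comp_mul_left_Ioi (fun v => v ^ (-1 - p) * (1 - cos v))
          0 hx, mul_zero, smul_eq_mul]
    _ = y ^ p * ∫ v in Ioi 0, v ^ (-1 - p) * (1 - cos v) := by
        rw [rpow_add hx, rpow_one]
        field_simp

lemma integral_rpow_mul_one_sub_cos_pos (hp0 : 0 < p) (hp2 : p < 2) :
    0 < ∫ u in Ioi 0, u ^ (-1 - p) * (1 - cos u) := by
  have hint := integrableOn_rpow_mul_one_sub_cos_mul hp0 hp2 1
  simp only [one_mul] at hint
  have hnonneg : 0 ≤ᵐ[volume.restrict (Ioi 0)] fun u : ℝ => u ^ (-1 - p) * (1 - cos u) := by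
    filter_upwards [ae_restrict_mem measurableSet_Ioi] with u (hu : 0 < u)
    exact mul_nonneg (rpow_nonneg hu.le _) (sub_nonneg.2 (cos_le_one _))
  rw [setIntegral_pos_iff_support_of_nonneg_ae hnonneg hint]
  have hsub : Ioo (π / 2) π ⊆
      Function.support (fun u : ℝ => u ^ (-1 - p) * (1 - cos u)) ∩ Ioi 0 := by
    intro u ⟨hu₁, hu₂⟩
    have hu0 : 0 < u := lt_trans (by positivity) hu₁
    have hcos : cos u ≤ 0 := cos_nonpos_of_pi_div_two_le_of_le hu₁.le (by linarith)
    exact ⟨(mul_pos (rpow_pos_of_pos hu0 _) (by linarith)).ne', hu0⟩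
  refine lt_of_lt_of_le ?_ (measure_mono hsub)
  rw [volume_Ioo, ENNReal.ofReal_pos]
  linarith [pi_pos]

theorem isPosSemidefKernel_incrementKernel_abs_rpow (hp0 : 0 < p) (hp2 : p < 2) :
    IsPosSemidefKernel (incrementKernel fun x => |x| ^ p) := by
  have hmix : IsPosSemidefKernel
      (incrementKernel fun x => ∫ u in Ioi 0, u ^ (-1 - p) * (1 - cos (x * u))) := by
    refine isPosSemidefKernel_incrementKernel_integral
      (integrableOn_rpow_mul_one_sub_cos_mul hp0 hp2) ?_
    filter_upwards [ae_restrict_mem measurableSet_Ioi] with u (hu : 0 < u)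
    rw [incrementKernel_const_mul]
    exact (isPosSemidefKernel_incrementKernel_one_sub_cos_mul u).const_mul (rpow_nonneg hu.le _)
  simp only [integral_rpow_mul_one_sub_cos_mul hp0, mul_comm (|_| ^ p),
    incrementKernel_const_mul] at hmix
  exact hmix.of_const_mul (integral_rpow_mul_one_sub_cos_pos hp0 hp2)

end FractionalPower

theorem fBm_cov_posSemidef (h : ℝ) (hh : h ∈ Set.Ioo (0 : ℝ) 1) :
    ∀ (n : ℕ) (t : Fin n → ℝ) (lam : Fin n → ℝ), (∀ i, 0 ≤ t i) →
      0 ≤ ∑ i, ∑ j, lam i * lam j *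
        ((1 / 2) * ((t j) ^ (2 * h) + (t i) ^ (2 * h) - |t j - t i| ^ (2 * h))) := by
  intro n t lam ht
  have hK := (isPosSemidefKernel_incrementKernel_abs_rpow (p := 2 * h) (by linarith [hh.1])
    (by linarith [hh.2])).const_mul (c := 1 / 2) (by norm_num) n t lam
  simpa only [incrementKernel, abs_of_nonneg (ht _), mul_left_comm _ (1 / 2 : ℝ)] using hK
end
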